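/- arXiv:1805.06787 — 2 statements merged into one kernel-verified Lean document; each statement's English description precedes it below -/
import Mathlib

section
/- Let U and Q be real Hilbert spaces, let a : U × U → ℝ and b : U × Q → ℝ be bounded bilinear forms with bounds C_a and C_b (i.e. |a(u,v)| ≤ C_a‖u‖‖v‖ and |b(u,q)| ≤ C_b‖u‖‖q‖). Assume a is coercive, i.e. there is α > 0 with a(u,u) ≥ α‖u‖² for all u ∈ U, and that b satisfies the inf-sup (LBB) condition, i.e. there is β > 0 such that for every q ∈ Q, sup_{u ∈ U, u ≠ 0} b(u,q)/‖u‖ ≥ β‖q‖. Define the saddle-point bilinear form K((u,p),(v,q)) := a(u,v) + b(u,q) + b(v,p) on (U × Q) × (U × Q). Then there exists a constant c > 0, depending only on α, β, C_a and C_b, such that for every (u,p) ∈ U × Q with (u,p) ≠ 0 there exists (v,q) ∈ U × Q with (v,q) ≠ 0 and K((u,p),(v,q)) ≥ c (‖u‖ + ‖p‖)(‖v‖ + ‖q‖). (This is the abstract content of the inf-sup stability of the saddle-point form K built from a coercive viscosity form and an LBB-stable divergence form, Corollary 3.5 of the paper.) -/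
private lemma saddle_aux_young (t Ca' α β x y : ℝ) (ht : 0 < t) (hβ : 0 < β)
    (ht2 : 2 * t * Ca' ^ 2 = α * β) :
    t * (Ca' * x * y) ≤ α / 2 * x ^ 2 + t * (β / 4) * y ^ 2 := by
  nlinarith [mul_nonneg ht.le (sq_nonneg (Ca' * x - β / 2 * y)), hβ.le, sq_nonneg x, sq_nonneg y]

private lemma saddle_aux_c1 (c1 t α β x y : ℝ) (hc1 : 0 < c1)
    (hc1a : c1 ≤ α / 2) (hc1b : c1 ≤ t * β / 4) :
    c1 / 2 * (x + y) ^ 2 ≤ α / 2 * x ^ 2 + t * β / 4 * y ^ 2 := by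
  nlinarith [sq_nonneg (x - y), sq_nonneg x, sq_nonneg y]

/-- Abstract inf-sup stability of the saddle-point bilinear form
`K((u,p),(v,q)) = a(u,v) + b(u,q) + b(v,p)` built from a bounded coercive form `a`
and a bounded LBB-stable form `b` (Corollary 3.5 of the paper). -/
theorem saddle_point_inf_sup
    {U Q : Type*} [NormedAddCommGroup U] [InnerProductSpace ℝ U] [CompleteSpace U]
    [NormedAddCommGroup Q] [InnerProductSpace ℝ Q] [CompleteSpace Q]
    (a : U → U → ℝ) (b : U → Q → ℝ) (Ca Cb α β : ℝ)
    (ha_lin_left : ∀ v : U, IsLinearMap ℝ (fun u => a u v))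
    (ha_lin_right : ∀ u : U, IsLinearMap ℝ (a u))
    (hb_lin_left : ∀ q : Q, IsLinearMap ℝ (fun u => b u q))
    (hb_lin_right : ∀ u : U, IsLinearMap ℝ (b u))
    (ha_bdd : ∀ u v : U, |a u v| ≤ Ca * ‖u‖ * ‖v‖)
    (hb_bdd : ∀ (u : U) (q : Q), |b u q| ≤ Cb * ‖u‖ * ‖q‖)
    (hα : 0 < α) (hcoer : ∀ u : U, α * ‖u‖ ^ 2 ≤ a u u)
    (hβ : 0 < β)
    (hLBB : ∀ q : Q, β * ‖q‖ ≤ ⨆ u : {u : U // u ≠ 0}, b u.1 q / ‖u.1‖) :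
    ∃ c > 0, ∀ up : U × Q, up ≠ 0 →
      ∃ vq : U × Q, vq ≠ 0 ∧
        c * (‖up.1‖ + ‖up.2‖) * (‖vq.1‖ + ‖vq.2‖) ≤
          a up.1 vq.1 + b up.1 vq.2 + b vq.1 up.2 := by
  -- A positive bound for `a`
  set Ca' : ℝ := max Ca 1 with hCa'def
  have hCa1 : (1:ℝ) ≤ Ca' := le_max_right Ca 1
  have hCa0 : (0:ℝ) < Ca' := lt_of_lt_of_le one_pos hCa1
  have hCaCa' : Ca ≤ Ca' := le_max_left Ca 1
  have ha_bdd' : ∀ u v : U, |a u v| ≤ Ca' * ‖u‖ * ‖v‖ := by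
    intro u v
    refine (ha_bdd u v).trans ?_
    exact mul_le_mul_of_nonneg_right
      (mul_le_mul_of_nonneg_right hCaCa' (norm_nonneg u)) (norm_nonneg v)
  -- the constants
  set t : ℝ := α * β / (2 * Ca' ^ 2) with htdef
  have ht : 0 < t := by
    apply div_pos (by positivity) (by positivity)
  have ht2 : 2 * t * Ca' ^ 2 = α * β := by
    rw [htdef]; field_simp
  set c1 : ℝ := min (α / 2) (t * β / 4) with hc1def
  have hc1 : 0 < c1 := lt_min (by positivity) (by positivity)
  have hc1a : c1 ≤ α / 2 := min_le_left _ _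
  have hc1b : c1 ≤ t * β / 4 := min_le_right _ _
  set c : ℝ := c1 / (2 * (1 + t)) with hcdef
  have hc : 0 < c := by positivity
  have hcc : c * (1 + t) = c1 / 2 := by
    rw [hcdef]; field_simp
  clear_value Ca' t c1 c
  refine ⟨c, hc, ?_⟩
  rintro ⟨u, p⟩ hup
  -- find w with ‖w‖ = ‖p‖ and b w p ≥ (β/2)‖p‖²
  obtain ⟨w, hwnorm, hwb⟩ : ∃ w : U, ‖w‖ = ‖p‖ ∧ β / 2 * ‖p‖ ^ 2 ≤ b w p := by
    by_cases hp : p = 0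
    · subst hp
      refine ⟨0, by simp, ?_⟩
      have h0 : b (0:U) (0:Q) = 0 := (hb_lin_left 0).map_zero
      simp [h0]
    · have hpnorm : 0 < ‖p‖ := norm_pos_iff.mpr hp
      have hsup := hLBB p
      have hne : Nonempty {u : U // u ≠ 0} := by
        by_contra hemp
        rw [not_nonempty_iff] at hemp
        have h0 : (⨆ u : {u : U // u ≠ 0}, b u.1 p / ‖u.1‖) = 0 := by
          rw [iSup_of_empty', Real.sSup_empty]
        rw [h0] at hsup
        nlinarith
      have hlt : β / 2 * ‖p‖ < ⨆ u : {u : U // u ≠ 0}, b u.1 p / ‖u.1‖ := by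
        have : β / 2 * ‖p‖ < β * ‖p‖ := by nlinarith
        linarith
      obtain ⟨⟨w₀, hw₀⟩, hgt⟩ := exists_lt_of_lt_ciSup hlt
      have hw₀n : 0 < ‖w₀‖ := norm_pos_iff.mpr hw₀
      have hgt' : β / 2 * ‖p‖ * ‖w₀‖ < b w₀ p := (lt_div_iff₀ hw₀n).mp hgt
      refine ⟨(‖p‖ / ‖w₀‖) • w₀, ?_, ?_⟩
      · rw [norm_smul, Real.norm_eq_abs, abs_of_pos (by positivity)]
        field_simp
      · have hsm : b ((‖p‖ / ‖w₀‖) • w₀) p = (‖p‖ / ‖w₀‖) * b w₀ p := by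
          have := (hb_lin_left p).map_smul (‖p‖ / ‖w₀‖) w₀
          simpa [smul_eq_mul] using this
        rw [hsm]
        have hpos : 0 < ‖p‖ / ‖w₀‖ := by positivity
        have : (‖p‖ / ‖w₀‖) * (β / 2 * ‖p‖ * ‖w₀‖) ≤ (‖p‖ / ‖w₀‖) * b w₀ p :=
          mul_le_mul_of_nonneg_left hgt'.le hpos.le
        calc β / 2 * ‖p‖ ^ 2 = (‖p‖ / ‖w₀‖) * (β / 2 * ‖p‖ * ‖w₀‖) := by
              field_simp
          _ ≤ (‖p‖ / ‖w₀‖) * b w₀ p := this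
  -- test functions
  refine ⟨(u + t • w, -p), ?_, ?_⟩
  · -- nonzero
    intro h
    rw [Prod.ext_iff] at h
    obtain ⟨hv0, hq0⟩ := h
    simp only [Prod.snd_zero, neg_eq_zero] at hq0
    have hw0 : w = 0 := by
      have : ‖w‖ = 0 := by rw [hwnorm, hq0, norm_zero]
      exact norm_eq_zero.mp this
    simp only [Prod.fst_zero, hw0, smul_zero, add_zero] at hv0
    exact hup (by simp [Prod.ext_iff, hv0, hq0])
  · -- the estimate
    simp only
    set x := ‖u‖ with hx
    set y := ‖p‖ with hy
    have hx0 : 0 ≤ x := norm_nonneg u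
    have hy0 : 0 ≤ y := norm_nonneg p
    clear_value x y
    -- expand the bilinear forms
    have e1 : a u (u + t • w) = a u u + t * a u w := by
      rw [(ha_lin_right u).map_add, (ha_lin_right u).map_smul, smul_eq_mul]
    have e2 : b u (-p) = -(b u p) := (hb_lin_right u).map_neg p
    have e3 : b (u + t • w) p = b u p + t * b w p := by
      have h1 := (hb_lin_left p).map_add u (t • w)
      have h2 := (hb_lin_left p).map_smul t w
      simp only [smul_eq_mul] at h1 h2
      simp only [h1, h2]
    rw [e1, e2, e3]
    -- bounds
    have h1 : α * x ^ 2 ≤ a u u := by rw [hx]; exact hcoer u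
    have h2 : -(t * (Ca' * x * y)) ≤ t * a u w := by
      have hb := ha_bdd' u w
      rw [hwnorm, ← hx] at hb
      have : -(Ca' * x * y) ≤ a u w := by
        have := neg_abs_le (a u w)
        nlinarith [abs_nonneg (a u w)]
      nlinarith
    have h3 : t * (β / 2 * y ^ 2) ≤ t * b w p :=
      mul_le_mul_of_nonneg_left hwb ht.le
    -- norm of test function
    have hvq : ‖u + t • w‖ + ‖-p‖ ≤ (1 + t) * (x + y) := by
      have hv : ‖u + t • w‖ ≤ x + t * y := by
        calc ‖u + t • w‖ ≤ ‖u‖ + ‖t • w‖ := norm_add_le _ _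
          _ = x + t * y := by
              rw [norm_smul, Real.norm_eq_abs, abs_of_pos ht, hwnorm, ← hx]
      rw [norm_neg]
      have htx : 0 ≤ t * x := mul_nonneg ht.le hx0
      linarith
    -- Young's inequality step
    have hyoung : t * (Ca' * x * y) ≤ α / 2 * x ^ 2 + t * (β / 4) * y ^ 2 :=
      saddle_aux_young t Ca' α β x y ht hβ ht2
    have hC : c1 / 2 * (x + y) ^ 2 ≤ α / 2 * x ^ 2 + t * β / 4 * y ^ 2 :=
      saddle_aux_c1 c1 t α β x y hc1 hc1a hc1b
    calc c * (x + y) * (‖u + t • w‖ + ‖-p‖)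
        ≤ c * (x + y) * ((1 + t) * (x + y)) := by
          exact mul_le_mul_of_nonneg_left hvq
            (mul_nonneg hc.le (by linarith only [hx0, hy0]))
      _ = c1 / 2 * (x + y) ^ 2 := by
          rw [show c * (x + y) * ((1 + t) * (x + y)) = c * (1 + t) * (x + y) ^ 2 by ring, hcc]
      _ ≤ α * x ^ 2 - t * (Ca' * x * y) + t * (β / 2 * y ^ 2) := by linarith only [hC, hyoung]
      _ ≤ a u u + t * a u w + -(b u p) + (b u p + t * b w p) := by linarith only [h1, h2, h3]
end

section
/- Let ν > 0, λ := 1/(2ν) − √(1/(4ν²) + 4π²), and define u : ℝ² → ℝ² by u(x,y) = (1 − e^{λx} cos(2πy), (λ/(2π)) e^{λx} sin(2πy)) and p : ℝ² → ℝ by p(x,y) = −(1/2) e^{2λx} + c for any constant c ∈ ℝ. Then (u, p) is an exact solution of the steady incompressible Navier–Stokes equations with zero forcing: at every point of ℝ², −ν Δu + (u·∇)u + ∇p = 0 and div u = 0, where Δu is applied componentwise, (u·∇)u has components u₁ ∂u_i/∂x + u₂ ∂u_i/∂y, and ∇p = (∂p/∂x, ∂p/∂y). Equivalently, (u,p) solves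 the steady Stokes equations −νΔu + ∇p = f, div u = 0 with right-hand side f = −(u·∇)u. -/
open Real

/-!
Every derivative of the Kovasznay field is again a multiple of `e^{λx} cos(2πy)` or
`e^{λx} sin(2πy)`. Divergence-freeness is the identity `2π · λ/(2π) = λ`. In the momentum
equations, the viscous term and the part of the convective term that is linear in `e^{λx}`
cancel because `λ` is a root of `ν λ² - λ - 4π² ν = 0`. The part quadratic in `e^{λx}`
cancels in the second equation; in the first it collapses to `λ e^{2λx}` by
`sin² + cos² = 1` and is balanced by the pressure gradient.
-/

theorem deriv_exp_const_mul (a : ℝ) : deriv (fun t => exp (a * t)) = fun t => a * exp (a * t) := by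
  funext t
  simpa [mul_comm] using ((hasDerivAt_id t).const_mul a).exp.deriv

theorem deriv_cos_const_mul (a : ℝ) : deriv (fun t => cos (a * t)) = fun t => -a * sin (a * t) := by
  funext t
  simpa [mul_comm] using ((hasDerivAt_id t).const_mul a).cos.deriv

theorem deriv_sin_const_mul (a : ℝ) : deriv (fun t => sin (a * t)) = fun t => a * cos (a * t) := by
  funext t
  simpa [mul_comm] using ((hasDerivAt_id t).const_mul a).sin.deriv

theorem mul_sq_sub_eq_of_eq_sub_sqrt {ν k lam : ℝ} (hν : ν ≠ 0) (hk : 0 ≤ k)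
    (hlam : lam = 1 / (2 * ν) - √(1 / (4 * ν ^ 2) + k)) : ν * lam ^ 2 - lam = k * ν := by
  have hsq : (1 / (2 * ν) - lam) ^ 2 = 1 / (4 * ν ^ 2) + k := by
    rw [hlam, sub_sub_cancel, sq_sqrt (by positivity)]
  field_simp at hsq
  refine mul_left_cancel₀ (mul_ne_zero four_ne_zero hν) ?_
  linear_combination hsq / 4

/-- The Kovasznay flow `(u, p)` is an exact solution of the steady incompressible
Navier–Stokes equations with zero forcing: `−νΔu + (u·∇)u + ∇p = 0` and `div u = 0`. -/
theorem kovasznay_solves_steady_navier_stokes (ν : ℝ) (hν : 0 < ν) (lam c : ℝ)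
    (hlam : lam = 1 / (2 * ν) - Real.sqrt (1 / (4 * ν ^ 2) + 4 * π ^ 2))
    (u₁ u₂ p : ℝ → ℝ → ℝ)
    (hu₁ : ∀ x y, u₁ x y = 1 - Real.exp (lam * x) * Real.cos (2 * π * y))
    (hu₂ : ∀ x y, u₂ x y = lam / (2 * π) * Real.exp (lam * x) * Real.sin (2 * π * y))
    (hp : ∀ x y, p x y = -(1 / 2) * Real.exp (2 * lam * x) + c) :
    ∀ x y : ℝ,
      (-ν * (deriv (fun s => deriv (fun t => u₁ t y) s) x
            + deriv (fun s => deriv (fun t => u₁ x t) s) y)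
        + u₁ x y * deriv (fun s => u₁ s y) x + u₂ x y * deriv (fun s => u₁ x s) y
        + deriv (fun s => p s y) x = 0)
      ∧ (-ν * (deriv (fun s => deriv (fun t => u₂ t y) s) x
            + deriv (fun s => deriv (fun t => u₂ x t) s) y)
        + u₁ x y * deriv (fun s => u₂ s y) x + u₂ x y * deriv (fun s => u₂ x s) y
        + deriv (fun s => p x s) y = 0)
      ∧ deriv (fun s => u₁ s y) x + deriv (fun s => u₂ x s) y = 0 := by
  have hquad := mul_sq_sub_eq_of_eq_sub_sqrt hν.ne' (by positivity) hlam
  have hlam_div : 2 * π * (lam / (2 * π)) = lam := mul_div_cancel₀ lam (by positivity)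
  intro x y
  have hu₁x : (fun t => u₁ t y) = fun t => 1 + -cos (2 * π * y) * exp (lam * t) := by
    funext t; rw [hu₁]; ring
  have hu₁y : (fun t => u₁ x t) = fun t => 1 + -exp (lam * x) * cos (2 * π * t) := by
    funext t; rw [hu₁]; ring
  have hu₂x : (fun t => u₂ t y) = fun t => lam / (2 * π) * sin (2 * π * y) * exp (lam * t) := by
    funext t; rw [hu₂]; ring
  have hu₂y : (fun t => u₂ x t) = fun t => lam / (2 * π) * exp (lam * x) * sin (2 * π * t) := by
    funext t; rw [hu₂]
  have hpx : (fun t => p t y) = fun t => c + -(1 / 2) * exp (2 * lam * t) := by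
    funext t; rw [hp]; ring
  have hpy : (fun t => p x t) = fun _ => -(1 / 2) * exp (2 * lam * x) + c := by
    funext t; rw [hp]
  -- `hu₁y` and `hu₂y` have left sides η-equal to `u₁ x`, `u₂ x`, so they also rewrite `u₁ x y`, `u₂ x y`.
  simp only [hu₁x, hu₁y, hu₂x, hu₂y, hpx, hpy, deriv_const_add', deriv_const_mul_field',
    deriv_exp_const_mul, deriv_cos_const_mul, deriv_sin_const_mul, deriv_const']
  rw [show exp (2 * lam * x) = exp (lam * x) ^ 2 by rw [← exp_nat_mul]; ring_nf]
  have hpyth := sin_sq_add_cos_sq (2 * π * y)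
  refine ⟨?_, ?_, ?_⟩
  · linear_combination (exp (lam * x) * cos (2 * π * y)) * hquad
      + (lam * exp (lam * x) ^ 2) * hpyth
      + (exp (lam * x) ^ 2 * sin (2 * π * y) ^ 2) * hlam_div
  · linear_combination (-(lam / (2 * π) * exp (lam * x) * sin (2 * π * y))) * hquad
      + (lam / (2 * π) * exp (lam * x) ^ 2 * sin (2 * π * y) * cos (2 * π * y)) * hlam_div
  · linear_combination (exp (lam * x) * cos (2 * π * y)) * hlam_div
end
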